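/- Let r2 ≥ 4 be even. There is no graph with parameters (r2, r3) for any r3 with C(r2−1, 2) < r3 < 4·C(r2/2, 2), and none for any r3 with 4·C(r2/2, 2) < r3 < C(r2, 2). -/

import Mathlib

open SimpleGraph Finset

/-- The K3-degree of a vertex: the number of triangles (3-cliques) of `G` containing `v`. -/
noncomputable def K3deg {V : Type*} (G : SimpleGraph V) (v : V) : ℕ :=
  {t : Finset V | G.IsNClique 3 t ∧ v ∈ t}.ncard

/-- The degree of a vertex, as the cardinality of its open neighbourhood. -/
noncomputable def deg {V : Type*} (G : SimpleGraph V) (v : V) : ℕ :=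
  (G.neighborSet v).ncard

/-- `G` has parameters `(r2, r3)`: every vertex has degree `r2` and K3-degree `r3`. -/
def HasParams {V : Type*} (G : SimpleGraph V) (r2 r3 : ℕ) : Prop :=
  ∀ v : V, deg G v = r2 ∧ K3deg G v = r3

/-!
Let `m = n(n - 1) - 2r₃` be the number of ordered pairs of distinct non-adjacent vertices in a
neighbourhood; it does not depend on the vertex, and the two ranges for `r₃` say exactly that
`2 ≤ m ≤ 2n - 4` and `m ≠ n`. Double counting the non-edges in the neighbourhoods of the ends
of an edge `xy` shows that `x` has at most two neighbours outside `N[y]`, and counting them in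
the neighbourhood of a common neighbour shows that two vertices at distance two have at least
`n - m / 2` common neighbours. Together these rule out a vertex at distance three from `x`: it
would force `m = 2n - 4` and `n ≤ 5`, impossible for even `n` with `m ≠ n`. So the neighbours
of every vertex of the second neighbourhood `D` of `x` lie in `N(x) ∪ D`; counting the edges
between `N(x)` and `D` in two ways leaves no possible value for `|D|`.
-/

variable {V : Type*}

lemma card_interedges_comm (H : SimpleGraph V) [DecidableRel H.Adj] (s t : Finset V) :
    #(H.interedges s t) = #(H.interedges t s) :=
  have : Std.Symm H.Adj := ⟨fun _ _ => Adj.symm⟩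
  Rel.card_interedges_comm s t

lemma deg_eq_degree [Fintype V] (G : SimpleGraph V) [DecidableRel G.Adj] (v : V) :
    deg G v = G.degree v := by
  rw [deg, Set.ncard_eq_toFinset_card', ← card_neighborFinset_eq_degree]
  rfl

lemma HasParams.isRegularOfDegree [Fintype V] {G : SimpleGraph V} [DecidableRel G.Adj]
    {n r : ℕ} (h : HasParams G n r) : G.IsRegularOfDegree n :=
  fun v => (deg_eq_degree G v).symm.trans (h v).1

variable [DecidableEq V]

lemma card_interedges_add_card_interedges_compl_self (H : SimpleGraph V) [DecidableRel H.Adj]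
    (s : Finset V) : #(H.interedges s s) + #(Hᶜ.interedges s s) = #s * #s - #s := by
  rw [← offDiag_card, ← card_union_of_disjoint]
  · congr 1
    ext ⟨a, b⟩
    simp only [mem_union, mk_mem_interedges_iff, compl_adj, mem_offDiag]
    by_cases hab : H.Adj a b
    · simp [hab, hab.ne]
    · simp [hab]
  · rw [Finset.disjoint_left]
    rintro ⟨a, b⟩ h h'
    exact ((compl_adj H a b).1 ((mk_mem_interedges_iff _).1 h').2.2).2
      ((mk_mem_interedges_iff _).1 h).2.2

variable [Fintype V]

section Counting

variable (H : SimpleGraph V) [DecidableRel H.Adj]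

lemma card_interedges_eq_sum_card_inter (s t : Finset V) :
    #(H.interedges s t) = ∑ a ∈ s, #(H.neighborFinset a ∩ t) := by
  rw [interedges, Rel.interedges_eq_biUnion, card_biUnion]
  · refine sum_congr rfl fun a _ => ?_
    rw [card_map, inter_comm, filter_mem_eq_inter.symm]
    congr 1
    ext b
    simp
  · intro a _ b _ hab
    simp only [Finset.disjoint_left, mem_map, Function.Embedding.coeFn_mk, not_exists, not_and]
    rintro _ ⟨c, -, rfl⟩ d - h
    exact hab (Prod.ext_iff.1 h).1.symm

lemma card_interedges_union_self {S T : Finset V} (h : Disjoint S T) :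
    #(H.interedges (S ∪ T) (S ∪ T)) =
      #(H.interedges S S) + 2 * #(H.interedges S T) + #(H.interedges T T) := by
  have hsplit : ∀ a, #(H.neighborFinset a ∩ (S ∪ T)) =
      #(H.neighborFinset a ∩ S) + #(H.neighborFinset a ∩ T) := fun a => by
    rw [inter_union_distrib_left,
      card_union_of_disjoint (h.mono inter_subset_right inter_subset_right)]
  simp only [card_interedges_eq_sum_card_inter, sum_union h, hsplit, sum_add_distrib]
  rw [← card_interedges_eq_sum_card_inter H T S, card_interedges_comm,
    card_interedges_eq_sum_card_inter]
  ring

end Counting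

lemma filter_interedges_neighborFinset_eq_offDiag (G : SimpleGraph V) [DecidableRel G.Adj]
    {x : V} {t : Finset V} (hcl : G.IsNClique 3 t) (hxt : x ∈ t) :
    {p ∈ G.interedges (G.neighborFinset x) (G.neighborFinset x) |
      ({x, p.1, p.2} : Finset V) = t} = (t.erase x).offDiag := by
  ext ⟨a, b⟩
  simp only [mem_filter, mk_mem_interedges_iff, mem_neighborFinset, mem_offDiag, mem_erase]
  constructor
  · rintro ⟨⟨hxa, hxb, hab⟩, rfl⟩
    exact ⟨⟨hxa.ne', by simp⟩, ⟨hxb.ne', by simp⟩, hab.ne⟩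
  · rintro ⟨⟨hax, ha⟩, ⟨hbx, hb⟩, hab⟩
    have hadj : G.Adj x a ∧ G.Adj x b ∧ G.Adj a b :=
      ⟨hcl.1 hxt ha hax.symm, hcl.1 hxt hb hbx.symm, hcl.1 ha hb hab⟩
    refine ⟨hadj, eq_of_subset_of_card_le ?_ ?_⟩
    · simp [insert_subset_iff, hxt, ha, hb]
    · rw [hcl.2, (is3Clique_triple_iff.2 hadj).2]

lemma card_interedges_neighborFinset_self (G : SimpleGraph V) [DecidableRel G.Adj] (x : V) :
    #(G.interedges (G.neighborFinset x) (G.neighborFinset x)) = 2 * K3deg G x := by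
  set T : Finset (Finset V) := {t ∈ G.cliqueFinset 3 | x ∈ t}
  have hK : K3deg G x = #T := by
    rw [K3deg, ← Set.ncard_coe_finset]
    congr
    ext t
    simp [T]
  have hmaps : ∀ p ∈ G.interedges (G.neighborFinset x) (G.neighborFinset x),
      ({x, p.1, p.2} : Finset V) ∈ T := by
    rintro ⟨a, b⟩ hp
    simp only [mk_mem_interedges_iff, mem_neighborFinset] at hp
    simp [T, is3Clique_triple_iff, hp]
  have hfiber : ∀ t ∈ T, #{p ∈ G.interedges (G.neighborFinset x) (G.neighborFinset x) |
      ({x, p.1, p.2} : Finset V) = t} = 2 := by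
    intro t ht
    obtain ⟨hcl, hxt⟩ := mem_filter.1 ht
    rw [mem_cliqueFinset_iff] at hcl
    rw [filter_interedges_neighborFinset_eq_offDiag G hcl hxt, offDiag_card,
      card_erase_of_mem hxt, hcl.2]
  rw [card_eq_sum_card_fiberwise hmaps, sum_congr rfl hfiber, sum_const, smul_eq_mul, hK,
    mul_comm]

def HasNbhdNonEdges (G : SimpleGraph V) [DecidableRel G.Adj] (m : ℕ) : Prop :=
  ∀ x, #(Gᶜ.interedges (G.neighborFinset x) (G.neighborFinset x)) = m

lemma HasParams.hasNbhdNonEdges {G : SimpleGraph V} [DecidableRel G.Adj] {n r : ℕ}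
    (h : HasParams G n r) : HasNbhdNonEdges G (n * n - n - 2 * r) :=
  fun x => by
    have := card_interedges_add_card_interedges_compl_self G (G.neighborFinset x)
    rw [card_interedges_neighborFinset_self, card_neighborFinset_eq_degree,
      h.isRegularOfDegree x, (h x).2] at this
    omega

section Regular

variable {G : SimpleGraph V} [DecidableRel G.Adj] {n m : ℕ} {x y z w : V}

lemma neighborFinset_eq_insert_inter_union (hxy : G.Adj x y) :
    G.neighborFinset x = insert y ((G.neighborFinset x ∩ G.neighborFinset y) ∪
      (G.neighborFinset x ∩ Gᶜ.neighborFinset y)) := by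
  ext v
  simp only [mem_insert, mem_union, mem_inter, mem_neighborFinset, compl_adj]
  by_cases hv : v = y
  · simp [hv, hxy]
  · by_cases hyv : G.Adj y v <;> simp [hv, hyv, Ne.symm hv]

lemma disjoint_neighborFinset_compl (y : V) :
    Disjoint (G.neighborFinset y) (Gᶜ.neighborFinset y) := by
  rw [neighborFinset_compl]
  exact disjoint_compl_right.mono_right sdiff_subset

lemma card_inter_add_card_inter_compl (hxy : G.Adj x y) :
    #(G.neighborFinset x ∩ G.neighborFinset y) + 1 +
      #(G.neighborFinset x ∩ Gᶜ.neighborFinset y) = G.degree x := by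
  have h := congrArg card (neighborFinset_eq_insert_inter_union hxy)
  rw [card_insert_of_notMem (by simp), card_union_of_disjoint
    ((disjoint_neighborFinset_compl y).mono inter_subset_right inter_subset_right)] at h
  rw [← card_neighborFinset_eq_degree, h]
  ring

lemma card_inter_compl_comm (hreg : G.IsRegularOfDegree n) (hxy : G.Adj x y) :
    #(G.neighborFinset x ∩ Gᶜ.neighborFinset y) =
      #(G.neighborFinset y ∩ Gᶜ.neighborFinset x) := by
  have hx := card_inter_add_card_inter_compl hxy
  have hy := card_inter_add_card_inter_compl hxy.symm
  rw [hreg x, inter_comm] at hx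
  rw [hreg y] at hy
  omega

lemma sum_card_inter_compl (x : V) :
    ∑ y ∈ G.neighborFinset x, #(G.neighborFinset x ∩ Gᶜ.neighborFinset y) =
      #(Gᶜ.interedges (G.neighborFinset x) (G.neighborFinset x)) := by
  simp only [card_interedges_eq_sum_card_inter, inter_comm]

lemma two_mul_card_inter_compl_add_card_interedges_le (hreg : G.IsRegularOfDegree n)
    (hm : HasNbhdNonEdges G m) (hxy : G.Adj x y) :
    2 * #(G.neighborFinset x ∩ Gᶜ.neighborFinset y) +
      #(G.interedges (G.neighborFinset x ∩ G.neighborFinset y)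
        (G.neighborFinset y ∩ Gᶜ.neighborFinset x)) ≤ m := by
  set U := G.neighborFinset x ∩ G.neighborFinset y
  set C := G.neighborFinset x ∩ Gᶜ.neighborFinset y
  set B := G.neighborFinset y ∩ Gᶜ.neighborFinset x
  set f := fun v => #(G.neighborFinset x ∩ Gᶜ.neighborFinset v)
  have hsum : ∑ v ∈ G.neighborFinset x, f v = m := by
    rw [← hm x, ← sum_card_inter_compl]
  rw [neighborFinset_eq_insert_inter_union hxy, sum_insert (by simp), sum_union
    ((disjoint_neighborFinset_compl y).mono inter_subset_right inter_subset_right)] at hsum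
  change f y + (∑ u ∈ U, f u + ∑ c ∈ C, f c) = m at hsum
  have hU : #(G.interedges U B) ≤ ∑ u ∈ U, f u := by
    rw [card_interedges_eq_sum_card_inter]
    refine sum_le_sum fun u hu => ?_
    change _ ≤ #(G.neighborFinset x ∩ Gᶜ.neighborFinset u)
    rw [card_inter_compl_comm hreg (mem_neighborFinset _ _ _ |>.1 (mem_inter.1 hu).1)]
    exact card_le_card (inter_subset_inter_left inter_subset_right)
  have hC : #C ≤ ∑ c ∈ C, f c := by
    rw [card_eq_sum_ones]
    refine sum_le_sum fun c hc => card_pos.2 ⟨y, ?_⟩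
    simp only [C, mem_inter, mem_neighborFinset, compl_adj] at hc ⊢
    exact ⟨hxy, Ne.symm hc.2.1, fun h => hc.2.2 h.symm⟩
  have : f y = #C := rfl
  omega

lemma two_mul_card_mul_card_inter_compl_le (hm : HasNbhdNonEdges G m) (hxy : G.Adj x y) :
    2 * ((#(G.neighborFinset x ∩ G.neighborFinset y) + 1) *
      #(G.neighborFinset y ∩ Gᶜ.neighborFinset x)) ≤
      m + 2 * #(G.interedges (G.neighborFinset x ∩ G.neighborFinset y)
        (G.neighborFinset y ∩ Gᶜ.neighborFinset x)) := by
  set U := G.neighborFinset x ∩ G.neighborFinset y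
  set B := G.neighborFinset y ∩ Gᶜ.neighborFinset x
  set S := insert x U
  have hSB : Disjoint S B := by
    rw [Finset.disjoint_left]
    intro a ha hb
    simp only [S, U, B, mem_insert, mem_inter, mem_neighborFinset, compl_adj] at ha hb
    rcases ha with rfl | ⟨ha, -⟩
    exacts [hb.2.1 rfl, hb.2.2 ha]
  have hSBy : S ∪ B ⊆ G.neighborFinset y :=
    union_subset (insert_subset ((mem_neighborFinset _ _ _).2 hxy.symm) inter_subset_right)
      inter_subset_left
  have hcompl : #(Gᶜ.interedges (S ∪ B) (S ∪ B)) ≤ m :=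
    hm y ▸ card_le_card (interedges_mono _ hSBy hSBy)
  have hsplit := G.card_interedges_add_card_interedges_compl hSB
  have hSB_eq : G.interedges S B = G.interedges U B := by
    ext ⟨a, b⟩
    simp only [S, B, mk_mem_interedges_iff, mem_insert, mem_inter, mem_neighborFinset, compl_adj]
    constructor
    · rintro ⟨rfl | ha, hb, hab⟩
      exacts [absurd hab hb.2.2, ⟨ha, hb, hab⟩]
    · rintro ⟨ha, hb, hab⟩
      exact ⟨Or.inr ha, hb, hab⟩
  rw [hSB_eq, card_insert_of_notMem (by simp [U])] at hsplit
  have := card_interedges_union_self Gᶜ hSB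
  omega

theorem card_inter_compl_le_two (hreg : G.IsRegularOfDegree n) (hm : HasNbhdNonEdges G m)
    (hm4 : m + 4 ≤ 2 * n) (hxy : G.Adj x y) :
    #(G.neighborFinset x ∩ Gᶜ.neighborFinset y) ≤ 2 := by
  have hdeg := card_inter_add_card_inter_compl hxy
  have hx := two_mul_card_inter_compl_add_card_interedges_le hreg hm hxy
  have hy := two_mul_card_mul_card_inter_compl_le hm hxy
  rw [hreg x] at hdeg
  rw [← card_inter_compl_comm hreg hxy] at hy
  -- With `Δ = #(N x \ N[y])` this gives `2Δ(n + 2 - Δ) ≤ 3m ≤ 6n - 12`,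
  -- false for `3 ≤ Δ < n`.
  by_contra! h
  obtain ⟨d, hd⟩ := Nat.exists_eq_add_of_le h
  nlinarith

theorem two_mul_le_two_mul_card_inter_add (hreg : G.IsRegularOfDegree n)
    (hm : HasNbhdNonEdges G m) {q : V} (hxw : Gᶜ.Adj x w)
    (hqx : G.Adj q x) (hqw : G.Adj q w) :
    2 * n ≤ 2 * #(G.neighborFinset x ∩ G.neighborFinset w) + m := by
  -- Each vertex of `N q \ {x, w}` other than a common neighbour of `x` and `w` is a non-neighbour
  -- of `x` or of `w`, i.e. the end of a non-edge of `N q` at `x` or `w`.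
  obtain ⟨hne, hnadj⟩ := (compl_adj G x w).1 hxw
  set S : Finset V := {x, w}
  set T := G.neighborFinset q \ S
  have hST : Disjoint S T := disjoint_sdiff
  have hSq : S ⊆ G.neighborFinset q := by simp [S, insert_subset_iff, hqx, hqw]
  have hT : #T = n - 2 := by
    rw [card_sdiff_of_subset hSq, card_neighborFinset_eq_degree, hreg q, card_pair hne]
  have hcross :
      #(Gᶜ.interedges S T) = #(Gᶜ.neighborFinset x ∩ T) + #(Gᶜ.neighborFinset w ∩ T) := by
    rw [card_interedges_eq_sum_card_inter, sum_pair hne]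
  have hq : q ∈ G.neighborFinset x ∩ G.neighborFinset w := by simp [hqx.symm, hqw.symm]
  have hcover : T ⊆ ((G.neighborFinset x ∩ G.neighborFinset w).erase q ∪
      Gᶜ.neighborFinset x ∩ T) ∪ Gᶜ.neighborFinset w ∩ T := by
    intro v hv
    have hv' := hv
    simp only [T, S, mem_sdiff, mem_insert, mem_singleton, mem_neighborFinset, not_or] at hv'
    simp only [mem_union, mem_erase, mem_inter, mem_neighborFinset, compl_adj, hv, and_true]
    by_cases hxv : G.Adj x v <;> by_cases hwv : G.Adj w v
    · exact Or.inl (Or.inl ⟨hv'.1.ne', hxv, hwv⟩)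
    · exact Or.inr ⟨Ne.symm hv'.2.2, hwv⟩
    · exact Or.inl (Or.inr ⟨Ne.symm hv'.2.1, hxv⟩)
    · exact Or.inr ⟨Ne.symm hv'.2.2, hwv⟩
  have hcommon :
      #T + 1 ≤ #(G.neighborFinset x ∩ G.neighborFinset w) + #(Gᶜ.interedges S T) := by
    have := (card_le_card hcover).trans ((card_union_le _ _).trans
      (Nat.add_le_add_right (card_union_le _ _) _))
    rw [card_erase_of_mem hq] at this
    have := card_pos.2 ⟨q, hq⟩
    omega
  have hSS : 2 ≤ #(Gᶜ.interedges S S) := by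
    have hsub : {(x, w), (w, x)} ⊆ Gᶜ.interedges S S := by
      simp [insert_subset_iff, mk_mem_interedges_iff, S, compl_adj, hne, Ne.symm hne, hnadj,
        G.adj_comm w x]
    simpa [card_pair (by simp [hne] : (x, w) ≠ (w, x))] using card_le_card hsub
  have hlocal : #(Gᶜ.interedges (S ∪ T) (S ∪ T)) ≤ m :=
    hm q ▸ card_le_card (interedges_mono _ (union_subset hSq sdiff_subset)
      (union_subset hSq sdiff_subset))
  have := card_interedges_union_self Gᶜ hST
  omega

theorem add_four_eq_of_dist_three (hreg : G.IsRegularOfDegree n) (hm : HasNbhdNonEdges G m)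
    (hm4 : m + 4 ≤ 2 * n) (hxy : G.Adj x y) (hyz : G.Adj y z) (hzw : G.Adj z w)
    (hxz : Gᶜ.Adj x z) (hxw : ¬G.Adj x w)
    (hdisj : Disjoint (G.neighborFinset x) (G.neighborFinset w)) :
    m + 4 = 2 * n := by
  -- `N z ⊇ (N z ∩ N x) ⊔ {w} ⊔ (N z ∩ N w)`, where the first part has at least
  -- `n - m / 2` elements and the last at least `n - 3`.
  have hzx := two_mul_le_two_mul_card_inter_add hreg hm hxz hxy.symm hyz
  have hzw' := card_inter_add_card_inter_compl hzw
  rw [hreg z] at hzw'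
  have := card_inter_compl_le_two hreg hm hm4 hzw
  have hpart : #(G.neighborFinset z ∩ G.neighborFinset x) + 1 +
      #(G.neighborFinset z ∩ G.neighborFinset w) ≤ n := by
    have hdisj' : Disjoint (G.neighborFinset z ∩ G.neighborFinset x)
        (G.neighborFinset z ∩ G.neighborFinset w) :=
      hdisj.mono inter_subset_right inter_subset_right
    have hw : w ∉ G.neighborFinset z ∩ G.neighborFinset x ∪
        G.neighborFinset z ∩ G.neighborFinset w := by
      simp [hxw]
    have hsub : insert w (G.neighborFinset z ∩ G.neighborFinset x ∪
        G.neighborFinset z ∩ G.neighborFinset w) ⊆ G.neighborFinset z :=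
      insert_subset ((mem_neighborFinset _ _ _).2 hzw) (union_subset inter_subset_left
        inter_subset_left)
    have := card_le_card hsub
    rw [card_insert_of_notMem hw, card_union_of_disjoint hdisj', card_neighborFinset_eq_degree,
      hreg z] at this
    omega
  rw [inter_comm] at hzx
  omega

theorem le_five_of_dist_three (hreg : G.IsRegularOfDegree n) (hm : HasNbhdNonEdges G m)
    (hm4 : m + 4 ≤ 2 * n) (hxy : G.Adj x y) (hyz : G.Adj y z) (hzw : G.Adj z w)
    (hxz : Gᶜ.Adj x z) (hxw : ¬G.Adj x w)
    (hdisj : Disjoint (G.neighborFinset x) (G.neighborFinset w)) :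
    n ≤ 5 := by
  -- `N z ∩ N w` has at least `n - 3` elements, but at most one inside and one outside `N y`.
  have hyw : ¬G.Adj y w := fun h =>
    Finset.disjoint_left.1 hdisj ((mem_neighborFinset _ _ _).2 hxy)
      ((mem_neighborFinset _ _ _).2 h.symm)
  have hzw' := card_inter_add_card_inter_compl hzw
  rw [hreg z] at hzw'
  have hout : #((G.neighborFinset z ∩ G.neighborFinset w) \ G.neighborFinset y) + 1 ≤ 2 := by
    have hsub : insert w ((G.neighborFinset z ∩ G.neighborFinset w) \ G.neighborFinset y) ⊆
        G.neighborFinset z ∩ Gᶜ.neighborFinset y := by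
      intro v hv
      simp only [mem_insert, mem_sdiff, mem_inter, mem_neighborFinset, compl_adj] at hv ⊢
      rcases hv with rfl | ⟨⟨hzv, hvw⟩, hyv⟩
      · exact ⟨hzw, fun h => hxw (h ▸ hxy), hyw⟩
      · exact ⟨hzv, fun h => hyw (h ▸ hvw.symm), hyv⟩
    have := (card_le_card hsub).trans (card_inter_compl_le_two hreg hm hm4 hyz.symm)
    rwa [card_insert_of_notMem (by simp)] at this
  have hin : #(G.neighborFinset z ∩ G.neighborFinset w ∩ G.neighborFinset y) + 1 ≤ 2 := by
    have hsub : insert z (G.neighborFinset z ∩ G.neighborFinset w ∩ G.neighborFinset y) ⊆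
        G.neighborFinset y ∩ Gᶜ.neighborFinset x := by
      intro v hv
      simp only [mem_insert, mem_inter, mem_neighborFinset, compl_adj] at hv ⊢
      rcases hv with rfl | ⟨⟨-, hvw⟩, hyv⟩
      · exact ⟨hyz, (compl_adj G x v).1 hxz⟩
      · refine ⟨hyv, fun h => hxw (h ▸ hvw.symm), fun h => ?_⟩
        exact Finset.disjoint_left.1 hdisj ((mem_neighborFinset _ _ _).2 h)
          ((mem_neighborFinset _ _ _).2 hvw)
    have := (card_le_card hsub).trans (card_inter_compl_le_two hreg hm hm4 hxy.symm)
    rwa [card_insert_of_notMem (by simp)] at this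
  have := card_inter_add_card_sdiff (G.neighborFinset z ∩ G.neighborFinset w) (G.neighborFinset y)
  have := card_inter_compl_le_two hreg hm hm4 hzw
  omega

def secondNbhd (G : SimpleGraph V) [DecidableRel G.Adj] (x : V) : Finset V :=
  {v | Gᶜ.Adj x v ∧ ¬Disjoint (G.neighborFinset x) (G.neighborFinset v)}

lemma mem_secondNbhd {v : V} :
    v ∈ secondNbhd G x ↔
      Gᶜ.Adj x v ∧ ¬Disjoint (G.neighborFinset x) (G.neighborFinset v) := by
  simp [secondNbhd]

theorem neighborFinset_subset_union_secondNbhd (hreg : G.IsRegularOfDegree n)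
    (hm : HasNbhdNonEdges G m) (heven : Even n) (hm2 : 2 ≤ m) (hm4 : m + 4 ≤ 2 * n)
    (hmn : m ≠ n) {v : V} (hv : v ∈ secondNbhd G x) :
    G.neighborFinset v ⊆ G.neighborFinset x ∪ secondNbhd G x := by
  intro q hq
  obtain ⟨hxv, hcommon⟩ := mem_secondNbhd.1 hv
  obtain ⟨y, hxy, hyv⟩ := not_disjoint_iff.1 hcommon
  rw [mem_neighborFinset] at hxy hyv hq
  by_contra hfar
  have hxq : ¬G.Adj x q := fun h => hfar (mem_union_left _ ((mem_neighborFinset _ _ _).2 h))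
  have hxq' : Gᶜ.Adj x q := (compl_adj G x q).2
    ⟨by rintro rfl; exact ((compl_adj G x v).1 hxv).2 hq.symm, hxq⟩
  have hdisj : Disjoint (G.neighborFinset x) (G.neighborFinset q) :=
    not_not.1 fun h => hfar (mem_union_right _ (mem_secondNbhd.2 ⟨hxq', h⟩))
  have := add_four_eq_of_dist_three hreg hm hm4 hxy hyv.symm hq hxv hxq hdisj
  have := le_five_of_dist_three hreg hm hm4 hxy hyv.symm hq hxv hxq hdisj
  obtain ⟨k, rfl⟩ := heven
  omega

theorem sum_card_inter_secondNbhd (hreg : G.IsRegularOfDegree n) (hm : HasNbhdNonEdges G m)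
    (x : V) : ∑ v ∈ secondNbhd G x, #(G.neighborFinset v ∩ G.neighborFinset x) = m := by
  rw [← card_interedges_eq_sum_card_inter, card_interedges_comm,
    card_interedges_eq_sum_card_inter, ← hm x, ← sum_card_inter_compl]
  refine sum_congr rfl fun y hy => ?_
  have hxy := (mem_neighborFinset _ _ _).1 hy
  rw [card_inter_compl_comm hreg hxy]
  congr 1
  ext v
  simp only [mem_inter, mem_secondNbhd, mem_neighborFinset, not_disjoint_iff]
  exact ⟨fun h => ⟨h.1, h.2.1⟩, fun h => ⟨h.1, h.2, y, hxy, h.1.symm⟩⟩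

lemma card_inter_add_card_inter_secondNbhd (hreg : G.IsRegularOfDegree n) {v : V}
    (hclosed : G.neighborFinset v ⊆ G.neighborFinset x ∪ secondNbhd G x) :
    #(G.neighborFinset v ∩ G.neighborFinset x) +
      #(G.neighborFinset v ∩ secondNbhd G x) = n := by
  have hdisj : Disjoint (G.neighborFinset x) (secondNbhd G x) := by
    rw [Finset.disjoint_left]
    intro a ha ha'
    exact ((compl_adj G x a).1 (mem_secondNbhd.1 ha').1).2 ((mem_neighborFinset _ _ _).1 ha)
  rw [← card_union_of_disjoint (hdisj.mono inter_subset_right inter_subset_right),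
    ← inter_union_distrib_left, inter_eq_left.2 hclosed, card_neighborFinset_eq_degree, hreg v]

end Regular

lemma false_of_second_nbhd_counts {m n p I : ℕ} (hm2 : 2 ≤ m) (hm4 : m + 4 ≤ 2 * n)
    (hmn : m ≠ n) (hA : m + I = p * n) (hI : I ≤ p * (p - 1))
    (hB : 2 * (p * n) ≤ 2 * m + p * m) : False := by
  rcases p with _ | _ | _ | p
  · omega
  · omega
  · omega
  · have : (p + 3) * (m + 4) ≤ (p + 3) * (2 * n) := Nat.mul_le_mul_left _ hm4
    have hp : p + 5 ≤ n := by nlinarith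
    obtain ⟨k, rfl⟩ := Nat.exists_eq_add_of_le hp
    simp only [Nat.add_sub_cancel] at hI
    nlinarith

theorem not_hasNbhdNonEdges [Nonempty V] {G : SimpleGraph V} [DecidableRel G.Adj] {n m : ℕ}
    (hreg : G.IsRegularOfDegree n) (heven : Even n) (hm2 : 2 ≤ m) (hm4 : m + 4 ≤ 2 * n)
    (hmn : m ≠ n) : ¬HasNbhdNonEdges G m := by
  intro hm
  obtain ⟨x⟩ := ‹Nonempty V›
  set D := secondNbhd G x
  have hclosed v (hv : v ∈ D) :=
    neighborFinset_subset_union_secondNbhd hreg hm heven hm2 hm4 hmn hv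
  have hsum : ∑ v ∈ D, #(G.neighborFinset v ∩ G.neighborFinset x) = m :=
    sum_card_inter_secondNbhd hreg hm x
  have hA : m + ∑ v ∈ D, #(G.neighborFinset v ∩ D) = #D * n := by
    rw [← hsum, ← sum_add_distrib, sum_congr rfl fun v hv =>
      card_inter_add_card_inter_secondNbhd hreg (hclosed v hv), sum_const, smul_eq_mul]
  have hI : ∑ v ∈ D, #(G.neighborFinset v ∩ D) ≤ #D * (#D - 1) := by
    rw [← smul_eq_mul, ← sum_const]
    refine sum_le_sum fun v hv => ?_
    rw [← card_erase_of_mem hv]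
    exact card_le_card fun w hw => mem_erase.2
      ⟨(G.ne_of_adj ((mem_neighborFinset _ _ _).1 (mem_inter.1 hw).1)).symm, (mem_inter.1 hw).2⟩
  have hB : 2 * (#D * n) ≤ 2 * m + #D * m := by
    have := sum_le_sum fun v (hv : v ∈ D) => by
      obtain ⟨hxv, hcommon⟩ := mem_secondNbhd.1 hv
      obtain ⟨q, hxq, hvq⟩ := not_disjoint_iff.1 hcommon
      exact two_mul_le_two_mul_card_inter_add hreg hm hxv.symm
        ((mem_neighborFinset _ _ _).1 hvq).symm ((mem_neighborFinset _ _ _).1 hxq).symm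
    simp only [sum_add_distrib, ← mul_sum, sum_const, smul_eq_mul, hsum] at this
    linarith
  exact false_of_second_nbhd_counts hm2 hm4 hmn hA hI hB

lemma two_mul_choose_two (a : ℕ) : 2 * a.choose 2 = a * (a - 1) := by
  rw [Nat.choose_two_right, Nat.mul_div_cancel' (Nat.even_mul_pred_self a).two_dvd]

lemma nonEdgeCount_bounds {n r : ℕ} (heven : Even n)
    (h : ((n - 1).choose 2 < r ∧ r < 4 * (n / 2).choose 2) ∨
      (4 * (n / 2).choose 2 < r ∧ r < n.choose 2)) :
    2 ≤ n * n - n - 2 * r ∧ n * n - n - 2 * r + 4 ≤ 2 * n ∧ n * n - n - 2 * r ≠ n := by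
  obtain ⟨k, rfl⟩ := heven
  have h1 := two_mul_choose_two (k + k)
  have h2 := two_mul_choose_two (k + k - 1)
  have h3 := two_mul_choose_two k
  rw [show (k + k) / 2 = k by omega] at h
  rcases k with _ | j
  · simp at h
  have e1 : (j + 1 + (j + 1)) * (j + 1 + (j + 1) - 1) = 4 * (j * j) + 6 * j + 2 := by
    rw [show j + 1 + (j + 1) - 1 = 2 * j + 1 by omega]; ring
  have e2 : (j + 1 + (j + 1) - 1) * (j + 1 + (j + 1) - 1 - 1) = 4 * (j * j) + 2 * j := by
    rw [show j + 1 + (j + 1) - 1 - 1 = 2 * j by omega,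
      show j + 1 + (j + 1) - 1 = 2 * j + 1 by omega]
    ring
  have e3 : (j + 1) * (j + 1 - 1) = j * j + j := by rw [Nat.add_sub_cancel]; ring
  have e4 : (j + 1 + (j + 1)) * (j + 1 + (j + 1)) = 4 * (j * j) + 8 * j + 4 := by ring
  omega

theorem stmt15_general (r2 r3 : ℕ) (heven : Even r2)
    (h : (Nat.choose (r2 - 1) 2 < r3 ∧ r3 < 4 * Nat.choose (r2 / 2) 2) ∨
      (4 * Nat.choose (r2 / 2) 2 < r3 ∧ r3 < Nat.choose r2 2)) :
    ¬ ∃ (V : Type) (_ : Fintype V) (_ : Nonempty V) (G : SimpleGraph V),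
      HasParams G r2 r3 := by
  rintro ⟨V, _, _, G, hG⟩
  classical
  obtain ⟨hm2, hm4, hmn⟩ := nonEdgeCount_bounds heven h
  exact not_hasNbhdNonEdges hG.isRegularOfDegree heven hm2 hm4 hmn hG.hasNbhdNonEdges

theorem stmt15 (r2 r3 : ℕ) (hr2 : 4 ≤ r2) (heven : Even r2)
    (h : (Nat.choose (r2 - 1) 2 < r3 ∧ r3 < 4 * Nat.choose (r2 / 2) 2) ∨
      (4 * Nat.choose (r2 / 2) 2 < r3 ∧ r3 < Nat.choose r2 2)) :
    ¬ ∃ (V : Type) (_ : Fintype V) (_ : Nonempty V) (G : SimpleGraph V),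
      HasParams G r2 r3 :=
  stmt15_general r2 r3 heven h
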